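/- Let λ>0, c>0, Δ>0 and set u(x,y)=c²Δ²−x²−y² on the open disc D={(x,y): x²+y²<c²Δ²}. Then the Fisher information of one observation equals (λ/(2πc)) ∬_D [e^{−λΔ+(λ/c)√(u(x,y))}/√(u(x,y))] · (1/λ − Δ + √(u(x,y))/c)² dx dy = (1/λ²) (1 − e^{−λΔ}(1+λ²Δ²)). -/

import Mathlib

/-! In polar coordinates the disc integral of a function of `u = c²Δ² - r²` becomes radial, and
the substitution `s = √(c²Δ² - r²)`, for which `r dr = -s ds`, cancels the `1/√u` singularity of the
density. What remains is `∫₀^{cΔ} e^{-λΔ + λs/c} (1/λ - Δ + s/c)² ds`, an exponential times a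
quadratic, which has an elementary antiderivative. -/

open MeasureTheory Real Set

theorem integral_comp_sq_add_sq (g : ℝ → ℝ) :
    ∫ q : ℝ × ℝ, g (q.1 ^ 2 + q.2 ^ 2) = 2 * π * ∫ r in Ioi 0, r * g (r ^ 2) := by
  have hθ : ∫ _ in Ioo (-π) π, (1 : ℝ) = 2 * π := by
    rw [setIntegral_const, volume_real_Ioo_of_le (by linarith [pi_pos])]
    ring
  rw [← integral_comp_polarCoord_symm, polarCoord_target, Measure.volume_eq_prod]
  simp only [polarCoord_symm_apply, smul_eq_mul, mul_pow, ← mul_add, cos_sq_add_sin_sq, mul_one]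
  rw [← hθ, mul_comm, ← setIntegral_prod_mul (fun r => r * g (r ^ 2)) (fun _ => (1 : ℝ))]
  simp only [mul_one]

theorem setIntegral_disc_comp_sq_add_sq (g : ℝ → ℝ) {R : ℝ} (hR : 0 ≤ R) :
    ∫ q in {q : ℝ × ℝ | q.1 ^ 2 + q.2 ^ 2 < R ^ 2}, g (q.1 ^ 2 + q.2 ^ 2)
      = 2 * π * ∫ r in Ioo 0 R, r * g (r ^ 2) := by
  have hdisc : MeasurableSet {q : ℝ × ℝ | q.1 ^ 2 + q.2 ^ 2 < R ^ 2} :=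
    measurableSet_lt (by fun_prop) (by fun_prop)
  have hradial : ∀ r ∈ Ioi (0 : ℝ),
      r * (Iio (R ^ 2)).indicator g (r ^ 2) = (Iio R).indicator (fun r => r * g (r ^ 2)) r := by
    intro r hr
    have hmem : r ^ 2 ∈ Iio (R ^ 2) ↔ r ∈ Iio R :=
      pow_lt_pow_iff_left₀ (le_of_lt hr) hR two_ne_zero
    by_cases h : r ∈ Iio R
    · rw [indicator_of_mem (hmem.2 h), indicator_of_mem h]
    · rw [indicator_of_notMem (mt hmem.1 h), indicator_of_notMem h, mul_zero]
  rw [← integral_indicator hdisc]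
  calc ∫ q, {q : ℝ × ℝ | q.1 ^ 2 + q.2 ^ 2 < R ^ 2}.indicator (fun q => g (q.1 ^ 2 + q.2 ^ 2)) q
      = ∫ q : ℝ × ℝ, (Iio (R ^ 2)).indicator g (q.1 ^ 2 + q.2 ^ 2) := rfl
    _ = 2 * π * ∫ r in Ioo 0 R, r * g (r ^ 2) := by
      rw [integral_comp_sq_add_sq, setIntegral_congr_fun measurableSet_Ioi hradial,
        setIntegral_indicator measurableSet_Iio, Ioi_inter_Iio]

theorem sqrt_sq_sub_sq_mem_Ioo {R r : ℝ} (hr : r ∈ Ioo 0 R) : √(R ^ 2 - r ^ 2) ∈ Ioo 0 R := by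
  obtain ⟨hr0, hrR⟩ := hr
  refine ⟨sqrt_pos.2 (by nlinarith), ?_⟩
  rw [sqrt_lt' (hr0.trans hrR)]
  nlinarith

theorem sqrt_sq_sub_sq_sqrt_sq_sub_sq {R r : ℝ} (hr : r ∈ Ioo 0 R) :
    √(R ^ 2 - √(R ^ 2 - r ^ 2) ^ 2) = r := by
  rw [sq_sqrt (by nlinarith [hr.1, hr.2]), sub_sub_cancel, sqrt_sq hr.1.le]

theorem image_sqrt_sq_sub_sq_Ioo (R : ℝ) : (fun r => √(R ^ 2 - r ^ 2)) '' Ioo 0 R = Ioo 0 R :=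
  Subset.antisymm (image_subset_iff.2 fun _ => sqrt_sq_sub_sq_mem_Ioo)
    fun _ hr => ⟨_, sqrt_sq_sub_sq_mem_Ioo hr, sqrt_sq_sub_sq_sqrt_sq_sub_sq hr⟩

theorem setIntegral_Ioo_mul_comp_sqrt_sq_sub_sq (F : ℝ → ℝ) (R : ℝ) :
    ∫ r in Ioo 0 R, r * F √(R ^ 2 - r ^ 2) = ∫ s in Ioo 0 R, s * F s := by
  have hderiv : ∀ s ∈ Ioo 0 R, HasDerivWithinAt (fun r => √(R ^ 2 - r ^ 2))
      (-s / √(R ^ 2 - s ^ 2)) (Ioo 0 R) s := by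
    intro s hs
    have hpos : 0 < R ^ 2 - s ^ 2 := by nlinarith [hs.1, hs.2]
    refine ((((hasDerivAt_pow 2 s).const_sub (R ^ 2)).sqrt hpos.ne').congr_deriv ?_)
      |>.hasDerivWithinAt
    field_simp
    norm_num
  have hinj : InjOn (fun r => √(R ^ 2 - r ^ 2)) (Ioo 0 R) := fun a ha b hb hab => by
    rw [← sqrt_sq_sub_sq_sqrt_sq_sub_sq ha, ← sqrt_sq_sub_sq_sqrt_sq_sub_sq hb]
    exact congrArg (fun t => √(R ^ 2 - t ^ 2)) hab
  conv_lhs => rw [← image_sqrt_sq_sub_sq_Ioo R,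
    integral_image_eq_integral_abs_deriv_smul measurableSet_Ioo hderiv hinj]
  refine setIntegral_congr_fun measurableSet_Ioo fun s hs => ?_
  have hpos := (sqrt_sq_sub_sq_mem_Ioo hs).1
  simp only [smul_eq_mul, sqrt_sq_sub_sq_sqrt_sq_sub_sq hs, abs_div, abs_neg, abs_of_pos hs.1,
    abs_of_pos hpos]
  field_simp

theorem integral_exp_mul_mul_add_mul_sq {a : ℝ} (ha : a ≠ 0) (p q R : ℝ) :
    ∫ s in (0 : ℝ)..R, exp (a * s) * (p + q * s) ^ 2
      = exp (a * R) * ((p + q * R) ^ 2 / a - 2 * q * (p + q * R) / a ^ 2 + 2 * q ^ 2 / a ^ 3)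
        - (p ^ 2 / a - 2 * q * p / a ^ 2 + 2 * q ^ 2 / a ^ 3) := by
  have hderiv : ∀ s ∈ uIcc 0 R, HasDerivAt
      (fun s => exp (a * s) *
        ((p + q * s) ^ 2 / a - 2 * q * (p + q * s) / a ^ 2 + 2 * q ^ 2 / a ^ 3))
      (exp (a * s) * (p + q * s) ^ 2) s := by
    intro s _
    have hlin : HasDerivAt (fun s => p + q * s) q s := by
      simpa using ((hasDerivAt_id s).const_mul q).const_add p
    have hexp : HasDerivAt (fun s => exp (a * s)) (exp (a * s) * a) s := by
      simpa using ((hasDerivAt_id s).const_mul a).exp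
    refine (hexp.mul ((((hlin.pow 2).div_const a).sub
      ((hlin.const_mul (2 * q)).div_const (a ^ 2))).add_const _)).congr_deriv ?_
    simp only [Pi.sub_apply, Pi.pow_apply]
    field_simp
    ring
  rw [intervalIntegral.integral_eq_sub_of_hasDerivAt hderiv
    ((by fun_prop : Continuous _).intervalIntegrable _ _)]
  simp only [mul_zero, add_zero, exp_zero, one_mul]

theorem setIntegral_disc_comp_sqrt_sq_sub (F : ℝ → ℝ) {R : ℝ} (hR : 0 ≤ R) :
    ∫ q in {q : ℝ × ℝ | q.1 ^ 2 + q.2 ^ 2 < R ^ 2}, F √(R ^ 2 - q.1 ^ 2 - q.2 ^ 2)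
      = 2 * π * ∫ s in Ioo 0 R, s * F s := by
  simp_rw [sub_sub]
  rw [setIntegral_disc_comp_sq_add_sq (fun t => F √(R ^ 2 - t)) hR,
    setIntegral_Ioo_mul_comp_sqrt_sq_sub_sq]

theorem fisher_information_eval (lam c Δ : ℝ) (hlam : 0 < lam) (hc : 0 < c) (hΔ : 0 < Δ) :
    lam / (2 * π * c) *
      ∫ q in {q : ℝ × ℝ | q.1 ^ 2 + q.2 ^ 2 < c ^ 2 * Δ ^ 2},
        Real.exp (-lam * Δ + lam / c * Real.sqrt (c ^ 2 * Δ ^ 2 - q.1 ^ 2 - q.2 ^ 2)) /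
            Real.sqrt (c ^ 2 * Δ ^ 2 - q.1 ^ 2 - q.2 ^ 2) *
          (1 / lam - Δ + Real.sqrt (c ^ 2 * Δ ^ 2 - q.1 ^ 2 - q.2 ^ 2) / c) ^ 2
      = 1 / lam ^ 2 * (1 - Real.exp (-lam * Δ) * (1 + lam ^ 2 * Δ ^ 2)) := by
  have hR : 0 ≤ c * Δ := by positivity
  have hpolar := setIntegral_disc_comp_sqrt_sq_sub
    (fun s => exp (-lam * Δ + lam / c * s) / s * (1 / lam - Δ + s / c) ^ 2) hR
  have hradial :
      ∫ s in Ioo 0 (c * Δ), s * (exp (-lam * Δ + lam / c * s) / s * (1 / lam - Δ + s / c) ^ 2)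
        = exp (-lam * Δ) *
          ∫ s in (0 : ℝ)..c * Δ, exp (lam / c * s) * (1 / lam - Δ + 1 / c * s) ^ 2 := by
    rw [intervalIntegral.integral_of_le hR, integral_Ioc_eq_integral_Ioo, ← integral_const_mul]
    refine setIntegral_congr_fun measurableSet_Ioo fun s hs => ?_
    rw [exp_add]
    field_simp [hs.1.ne']
  rw [mul_pow] at hpolar
  rw [hpolar, hradial, integral_exp_mul_mul_add_mul_sq (by positivity)]
  have hexp : exp (-lam * Δ) * exp (lam / c * (c * Δ)) = 1 := by
    rw [← exp_add, ← exp_zero]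
    congr 1
    field_simp
    ring
  rw [mul_sub, ← mul_assoc (exp (-lam * Δ)), hexp]
  field_simp
  ring
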